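/- arXiv:2001.11624 — 5 statements merged into one kernel-verified Lean document; each statement's English description precedes it below -/
import Mathlib

section
/- Let p ≥ 0, r > 0, ξ, c, d ≥ 0, and let u(s) = P(s)(1 + c·cos(ξs) + d·sin(ξs))·e^{−rs} where P(s) = ∑_{k=0}^{p} a_k s^k is a real polynomial. Then there exist real (3p+3)×(3p+3) matrices A_u and B_u, with every complex eigenvalue of B_u having strictly positive real part, such that u(s) = ⟨A_u | exp(−s B_u)⟩ for all s ≥ 0. -/
/-!
Split `u` as `P(s) · (1 + c cos ξs + d sin ξs) e^{-rs}`. For the generator `J` of rotations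
about the first coordinate axis of `ℝ³`, `J³ = -J`, so `exp (t J)` is given by Rodrigues' formula
and `(1 + c cos ξs + d sin ξs) e^{-rs} = ⟨A | exp (-s (r + ξ J))⟩`; the eigenvalues of `r + ξ J`
are `r` and `r ± iξ`. For the nilpotent shift `N` on `ℝ^{p+1}`, the first row of `exp (s N)` is
`(s^k / k!)ₖ`, so `P(s) = ⟨A' | exp (s N)⟩`. Since `exp (B ⊗ 1 + 1 ⊗ B') = exp B ⊗ exp B'` and
`⟨A ⊗ A' | X ⊗ Y⟩ = ⟨A | X⟩ ⟨A' | Y⟩`, the Kronecker sum `(r + ξ J) ⊗ 1 - 1 ⊗ N` represents the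
product, and adding the commuting nilpotent `-1 ⊗ N` does not change the spectrum.
-/

open Matrix Real
open scoped Kronecker

theorem NormedSpace.exp_smul_eq_of_mul_mul_self_eq_neg {𝔸 : Type*} [NormedRing 𝔸]
    [NormedAlgebra ℝ 𝔸] [CompleteSpace 𝔸] {x : 𝔸} (hx : x * x * x = -x) (t : ℝ) :
    NormedSpace.exp (t • x) = 1 + Real.sin t • x + (1 - Real.cos t) • (x * x) := by
  let _ : NormedAlgebra ℚ 𝔸 := NormedAlgebra.restrictScalars ℚ ℝ 𝔸
  -- `E` solves `E' = x E` with `E 0 = 1`, so `exp (-t x) * E t` is constant.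
  set E : ℝ → 𝔸 := fun t => 1 + Real.sin t • x + (1 - Real.cos t) • (x * x)
  have hE : ∀ t, HasDerivAt E (x * E t) t := by
    intro t
    have hxE : x * E t = Real.cos t • x + Real.sin t • (x * x) := by
      have hx' : x * (x * x) = -x := by rw [← mul_assoc, hx]
      simp only [E, mul_add, mul_one, mul_smul_comm, hx']
      rw [smul_neg, sub_smul, one_smul]
      abel
    refine ((((Real.hasDerivAt_sin t).smul_const x).const_add 1).add
      (((Real.hasDerivAt_cos t).const_sub 1).smul_const (x * x))).congr_deriv ?_
    rw [hxE, neg_neg]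
  have hF : ∀ t, HasDerivAt (fun t => NormedSpace.exp (t • -x) * E t) 0 t := fun t =>
    ((hasDerivAt_exp_smul_const (𝕂 := ℝ) (-x) t).mul (hE t)).congr_deriv
      (by rw [mul_neg, neg_mul, mul_assoc, neg_add_cancel])
  have hFt : NormedSpace.exp (t • -x) * E t = 1 := by
    simpa [E] using is_const_of_deriv_eq_zero (fun t => (hF t).differentiableAt)
      (fun t => (hF t).deriv) t 0
  have hinv : NormedSpace.exp (t • x) * NormedSpace.exp (t • -x) = 1 := by
    rw [← NormedSpace.exp_add_of_commute ((Commute.refl x).neg_right.smul_left t |>.smul_right t),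
      smul_neg, add_neg_cancel, NormedSpace.exp_zero]
  calc NormedSpace.exp (t • x)
      = NormedSpace.exp (t • x) * (NormedSpace.exp (t • -x) * E t) := by rw [hFt, mul_one]
    _ = E t := by rw [← mul_assoc, hinv, one_mul]

theorem NormedSpace.exp_eq_sum_range_of_pow_eq_zero {𝕂 𝔸 : Type*} [Field 𝕂] [CharZero 𝕂]
    [Ring 𝔸] [Algebra 𝕂 𝔸] [TopologicalSpace 𝔸] [IsTopologicalRing 𝔸] [T2Space 𝔸] {x : 𝔸}
    {n : ℕ} (hx : x ^ n = 0) :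
    NormedSpace.exp x = ∑ k ∈ Finset.range n, ((k.factorial : 𝕂)⁻¹) • x ^ k := by
  rw [NormedSpace.exp_eq_tsum 𝕂]
  refine tsum_eq_sum fun k hk => ?_
  rw [Finset.mem_range, not_lt] at hk
  rw [← Nat.add_sub_cancel' hk, pow_add, hx, zero_mul, smul_zero]

namespace Matrix

section KroneckerAlgHom
variable (R : Type*) (m n : Type*) [Fintype m] [DecidableEq m] [Fintype n] [DecidableEq n]
  [CommSemiring R]

@[simps]
def kroneckerOneAlgHom : Matrix m m R →ₐ[R] Matrix (m × n) (m × n) R where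
  toFun A := A ⊗ₖ 1
  map_one' := one_kronecker_one
  map_mul' A B := by rw [← mul_kronecker_mul, one_mul]
  map_zero' := zero_kronecker _
  map_add' A B := add_kronecker A B 1
  commutes' r := by simp [Algebra.algebraMap_eq_smul_one, smul_kronecker]

def oneKroneckerAlgHom : Matrix n n R →ₐ[R] Matrix (m × n) (m × n) R where
  toFun B := 1 ⊗ₖ B
  map_one' := one_kronecker_one
  map_mul' A B := by rw [← mul_kronecker_mul, one_mul]
  map_zero' := kronecker_zero _
  map_add' A B := kronecker_add 1 A B
  commutes' r := by simp [Algebra.algebraMap_eq_smul_one, kronecker_smul]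

end KroneckerAlgHom

theorem commute_kronecker_one_one_kronecker {m n R : Type*} [Fintype m] [DecidableEq m]
    [Fintype n] [DecidableEq n] [CommSemiring R] (A : Matrix m m R) (B : Matrix n n R) :
    Commute (A ⊗ₖ 1) (1 ⊗ₖ B) := by
  simp only [Commute, SemiconjBy, ← mul_kronecker_mul, one_mul, mul_one]

section KroneckerExp
variable {m n 𝕜 : Type*} [Fintype m] [DecidableEq m] [Fintype n] [DecidableEq n] [RCLike 𝕜]

open scoped Norms.Operator in
theorem exp_kronecker_one (A : Matrix m m 𝕜) :
    NormedSpace.exp (A ⊗ₖ (1 : Matrix n n 𝕜)) = NormedSpace.exp A ⊗ₖ 1 :=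
  (NormedSpace.map_exp (kroneckerOneAlgHom 𝕜 m n)
    (continuous_matrix fun _ _ => (continuous_id.matrix_elem _ _).mul continuous_const) A).symm

open scoped Norms.Operator in
theorem exp_one_kronecker (B : Matrix n n 𝕜) :
    NormedSpace.exp ((1 : Matrix m m 𝕜) ⊗ₖ B) = 1 ⊗ₖ NormedSpace.exp B :=
  (NormedSpace.map_exp (oneKroneckerAlgHom 𝕜 m n)
    (continuous_matrix fun _ _ => continuous_const.mul (continuous_id.matrix_elem _ _)) B).symm

theorem exp_kronecker_one_add_one_kronecker (A : Matrix m m 𝕜) (B : Matrix n n 𝕜) :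
    NormedSpace.exp (A ⊗ₖ 1 + 1 ⊗ₖ B) = NormedSpace.exp A ⊗ₖ NormedSpace.exp B := by
  rw [exp_add_of_commute _ _ (commute_kronecker_one_one_kronecker A B), exp_kronecker_one,
    exp_one_kronecker, ← mul_kronecker_mul, one_mul, mul_one]

open scoped Norms.Operator in
theorem exp_reindex (e : m ≃ n) (A : Matrix m m 𝕜) :
    NormedSpace.exp (reindex e e A) = reindex e e (NormedSpace.exp A) :=
  (NormedSpace.map_exp (reindexAlgEquiv 𝕜 𝕜 e) (continuous_id.matrix_reindex e e) A).symm

end KroneckerExp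

theorem trace_transpose_kronecker_mul_kronecker {m n R : Type*} [Fintype m] [Fintype n]
    [CommSemiring R] (A X : Matrix m m R) (B Y : Matrix n n R) :
    trace ((A ⊗ₖ B)ᵀ * (X ⊗ₖ Y)) = trace (Aᵀ * X) * trace (Bᵀ * Y) := by
  rw [← kroneckerMap_transpose, ← mul_kronecker_mul, trace_kronecker]

theorem trace_reindex {m n R : Type*} [Fintype m] [Fintype n] [AddCommMonoid R]
    (e : m ≃ n) (A : Matrix m m R) : trace (reindex e e A) = trace A :=
  e.symm.sum_comp fun i => A i i

theorem map_kronecker {m n R S : Type*} [Mul R] [Mul S] {f : R → S}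
    (hf : ∀ a b, f (a * b) = f a * f b) (A : Matrix m m R) (B : Matrix n n R) :
    (A ⊗ₖ B).map f = A.map f ⊗ₖ B.map f := by
  ext; simp [hf]

theorem spectrum_kronecker_one_add_one_kronecker_subset {m n R : Type*} [Fintype m]
    [DecidableEq m] [Fintype n] [DecidableEq n] [CommRing R] (A : Matrix m m R)
    {N : Matrix n n R} (hN : IsNilpotent N) :
    spectrum R (A ⊗ₖ 1 + 1 ⊗ₖ N) ⊆ spectrum R A := by
  intro μ hμ hA
  have hunit : IsUnit (kroneckerOneAlgHom R m n (algebraMap R _ μ - A)) :=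
    (spectrum.mem_resolventSet_iff.mp hA).map _
  have hnil : IsNilpotent (-(1 ⊗ₖ N) : Matrix (m × n) (m × n) R) :=
    (hN.map (oneKroneckerAlgHom R m n)).neg
  have hcomm : Commute (-(1 ⊗ₖ N)) (kroneckerOneAlgHom R m n (algebraMap R _ μ - A)) :=
    (commute_kronecker_one_one_kronecker _ N).symm.neg_left
  refine hμ (spectrum.mem_resolventSet_iff.mpr ?_)
  convert hnil.isUnit_add_left_of_commute hunit hcomm using 1
  rw [map_sub, AlgHom.commutes, kroneckerOneAlgHom_apply]
  abel

theorem exp_smul_one {m : Type*} [Fintype m] [DecidableEq m] (c : ℝ) :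
    NormedSpace.exp (c • (1 : Matrix m m ℝ)) = Real.exp c • 1 := by
  rw [smul_one_eq_diagonal, exp_diagonal, Pi.exp_def, smul_one_eq_diagonal, Real.exp_eq_exp_ℝ]

end Matrix

section MatrixExpRepr

variable {m n : Type*} [Fintype m] [DecidableEq m] [Fintype n] [DecidableEq n]

def IsMatrixExpRepr (A B : Matrix m m ℝ) (u : ℝ → ℝ) : Prop :=
  ∀ s : ℝ, u s = trace (Aᵀ * NormedSpace.exp (-(s • B)))

theorem IsMatrixExpRepr.kronecker {A B : Matrix m m ℝ} {A' B' : Matrix n n ℝ} {u v : ℝ → ℝ}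
    (hu : IsMatrixExpRepr A B u) (hv : IsMatrixExpRepr A' B' v) :
    IsMatrixExpRepr (A ⊗ₖ A') (B ⊗ₖ 1 + 1 ⊗ₖ B') (u * v) := by
  intro s
  have hsplit : -(s • (B ⊗ₖ 1 + 1 ⊗ₖ B')) = (-(s • B)) ⊗ₖ 1 + 1 ⊗ₖ (-(s • B')) := by
    rw [← neg_smul, smul_add, ← smul_kronecker, ← kronecker_smul, neg_smul, neg_smul]
  rw [hsplit, exp_kronecker_one_add_one_kronecker, trace_transpose_kronecker_mul_kronecker,
    Pi.mul_apply, hu s, hv s]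

theorem IsMatrixExpRepr.reindex {A B : Matrix m m ℝ} {u : ℝ → ℝ} (hu : IsMatrixExpRepr A B u)
    (e : m ≃ n) : IsMatrixExpRepr (reindex e e A) (reindex e e B) u := by
  intro s
  rw [hu s, ← trace_reindex e, ← coe_reindexAlgEquiv ℝ ℝ e, map_mul, coe_reindexAlgEquiv,
    ← transpose_reindex, ← exp_reindex, ← coe_reindexAlgEquiv ℝ ℝ e, map_neg, map_smul,
    coe_reindexAlgEquiv]

theorem IsMatrixExpRepr.smul_one_add {A B : Matrix m m ℝ} {u : ℝ → ℝ}
    (hu : IsMatrixExpRepr A B u) (r : ℝ) :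
    IsMatrixExpRepr A (r • 1 + B) (fun s => u s * Real.exp (-r * s)) := by
  intro s
  beta_reduce
  have hcomm : Commute ((-(r * s)) • (1 : Matrix m m ℝ)) (-(s • B)) :=
    (Commute.one_left _).smul_left _
  rw [smul_add, neg_add, smul_smul, ← neg_smul, mul_comm s r, exp_add_of_commute _ _ hcomm,
    exp_smul_one, smul_one_mul, mul_smul_comm, trace_smul, smul_eq_mul, ← hu s, neg_mul, mul_comm]

end MatrixExpRepr

def rotationGenerator (R : Type*) [Ring R] : Matrix (Fin 3) (Fin 3) R :=
  !![0, 0, 0; 0, 0, -1; 0, 1, 0]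

theorem rotationGenerator_mul_mul_self (R : Type*) [Ring R] :
    rotationGenerator R * rotationGenerator R * rotationGenerator R = -rotationGenerator R := by
  ext i j
  fin_cases i <;> fin_cases j <;> simp [rotationGenerator, mul_apply, Fin.sum_univ_three]

open scoped Norms.Operator in
theorem exp_smul_rotationGenerator (t : ℝ) :
    NormedSpace.exp (t • rotationGenerator ℝ) =
      !![1, 0, 0; 0, Real.cos t, -Real.sin t; 0, Real.sin t, Real.cos t] := by
  refine (NormedSpace.exp_smul_eq_of_mul_mul_self_eq_neg
    (rotationGenerator_mul_mul_self ℝ) t).trans ?_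
  ext i j
  fin_cases i <;> fin_cases j <;> simp [rotationGenerator, one_apply]

theorem isMatrixExpRepr_rotationGenerator (ξ c d : ℝ) :
    IsMatrixExpRepr !![1, 0, 0; 0, c, d; 0, 0, 0] (ξ • rotationGenerator ℝ)
      (fun s => 1 + c * Real.cos (ξ * s) + d * Real.sin (ξ * s)) := by
  intro s
  rw [smul_smul, ← neg_smul, exp_smul_rotationGenerator]
  simp [trace_fin_three, mul_apply, Fin.sum_univ_three, mul_comm ξ s]

theorem re_of_mem_spectrum_smul_one_add_smul_rotationGenerator {r ξ : ℝ} {μ : ℂ}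
    (hμ : μ ∈ spectrum ℂ ((r • 1 + ξ • rotationGenerator ℝ).map Complex.ofReal)) : μ.re = r := by
  by_contra hne
  refine hμ (spectrum.mem_resolventSet_iff.mpr ?_)
  rw [isUnit_iff_isUnit_det, isUnit_iff_ne_zero]
  have hdet : det (algebraMap ℂ _ μ - (r • 1 + ξ • rotationGenerator ℝ).map Complex.ofReal) =
      (μ - r) * ((μ - r + ξ * Complex.I) * (μ - r - ξ * Complex.I)) := by
    have hM : algebraMap ℂ _ μ - (r • 1 + ξ • rotationGenerator ℝ).map Complex.ofReal =
        !![μ - r, 0, 0; 0, μ - r, ξ; 0, -ξ, μ - r] := by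
      ext i j
      fin_cases i <;> fin_cases j <;>
        simp [rotationGenerator, Algebra.algebraMap_eq_smul_one, one_apply]
    rw [hM, det_fin_three]
    simp only [of_apply, cons_val', cons_val_zero, cons_val_fin_one, cons_val_one, cons_val]
    linear_combination ((μ - r) * ξ ^ 2) * Complex.I_sq
  have hre : (μ - r).re ≠ 0 := by simpa [sub_eq_zero] using hne
  rw [hdet]
  refine mul_ne_zero (fun h => hre (by simp [h])) (mul_ne_zero ?_ ?_) <;> intro h <;> apply hre <;>
    simpa using congrArg Complex.re h

def upperShift (R : Type*) [Zero R] [One R] (n : ℕ) : Matrix (Fin n) (Fin n) R :=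
  of fun i j => if (j : ℕ) = i + 1 then 1 else 0

theorem upperShift_pow_apply {R : Type*} [Semiring R] {n : ℕ} (k : ℕ) (i j : Fin n) :
    (upperShift R n ^ k) i j = if (j : ℕ) = i + k then 1 else 0 := by
  induction k generalizing j with
  | zero => simp [one_apply, Fin.ext_iff, eq_comm]
  | succ k ih =>
    rw [pow_succ, mul_apply]
    simp only [ih]
    simp only [upperShift, of_apply, ite_mul, one_mul, zero_mul]
    by_cases hk : (i : ℕ) + k < n
    · rw [Finset.sum_eq_single ⟨i + k, hk⟩ (fun l _ hl => if_neg (by simpa [Fin.ext_iff] using hl))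
        (by simp)]
      simp [add_assoc]
    · rw [Finset.sum_eq_zero (fun l _ => if_neg (by omega))]
      simp only [right_eq_ite_iff]; omega

theorem upperShift_pow_self (R : Type*) [Semiring R] (n : ℕ) : upperShift R n ^ n = 0 := by
  ext i j
  rw [upperShift_pow_apply, if_neg (by omega), Matrix.zero_apply]

theorem isNilpotent_upperShift (R : Type*) [Semiring R] (n : ℕ) :
    IsNilpotent (upperShift R n) :=
  ⟨n, upperShift_pow_self R n⟩

theorem exp_smul_upperShift_zero_apply (n : ℕ) (s : ℝ) (j : Fin (n + 1)) :
    NormedSpace.exp (s • upperShift ℝ (n + 1)) 0 j = s ^ (j : ℕ) / (j : ℕ).factorial := by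
  rw [NormedSpace.exp_eq_sum_range_of_pow_eq_zero (𝕂 := ℝ)
    (by rw [smul_pow, upperShift_pow_self, smul_zero]), Matrix.sum_apply,
    Finset.sum_eq_single (j : ℕ)]
  · simp only [smul_pow, Matrix.smul_apply, upperShift_pow_apply, Fin.coe_ofNat_eq_mod,
      Nat.zero_mod, zero_add, ↓reduceIte, smul_eq_mul, mul_one]
    ring
  · intro k _ hk; simp [smul_pow, upperShift_pow_apply, Ne.symm hk]
  · intro h; simp only [Finset.mem_range, Order.lt_add_one_iff, not_le] at h; omega

theorem isMatrixExpRepr_neg_upperShift {n : ℕ} (a : Fin (n + 1) → ℝ) :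
    IsMatrixExpRepr (of fun i j : Fin (n + 1) => if i = 0 then (j : ℕ).factorial * a j else 0)
      (-upperShift ℝ (n + 1)) (fun s => ∑ k, a k * s ^ (k : ℕ)) := by
  intro s
  simp only [trace, smul_neg, neg_neg, diag_apply, mul_apply, transpose_apply, of_apply, ite_mul,
    zero_mul, Finset.sum_ite_eq', Finset.mem_univ, ↓reduceIte, exp_smul_upperShift_zero_apply]
  exact Finset.sum_congr rfl fun k _ => by field_simp

theorem stmt1_general (p : ℕ) (r ξ c d : ℝ) (hr : 0 < r)
    (a : Fin (p + 1) → ℝ) :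
    ∃ (Au Bu : Matrix (Fin (3 * p + 3)) (Fin (3 * p + 3)) ℝ),
      (∀ μ ∈ spectrum ℂ (Bu.map (Complex.ofReal)), 0 < μ.re) ∧
      ∀ s : ℝ, 0 ≤ s →
        (∑ k : Fin (p + 1), a k * s ^ (k : ℕ)) *
            (1 + c * Real.cos (ξ * s) + d * Real.sin (ξ * s)) * Real.exp (-r * s) =
          Matrix.trace (Auᵀ * NormedSpace.exp (-(s • Bu))) := by
  let e : Fin 3 × Fin (p + 1) ≃ Fin (3 * p + 3) := finProdFinEquiv.trans (finCongr (by ring))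
  have hrepr := (((isMatrixExpRepr_rotationGenerator ξ c d).smul_one_add r).kronecker
    (isMatrixExpRepr_neg_upperShift a)).reindex e
  refine ⟨_, _, fun μ hμ => ?_, fun s _ => by rw [← hrepr s, Pi.mul_apply]; ring⟩
  have hmap : ∀ X : Matrix (Fin 3 × Fin (p + 1)) (Fin 3 × Fin (p + 1)) ℝ,
      (reindex e e X).map Complex.ofReal = reindex e e (X.map Complex.ofReal) := fun _ => rfl
  have hnil : IsNilpotent ((-upperShift ℝ (p + 1)).map Complex.ofReal) :=
    (isNilpotent_upperShift ℝ (p + 1)).neg.map Complex.ofRealHom.mapMatrix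
  rw [hmap, ← coe_reindexAlgEquiv ℂ ℂ e, AlgEquiv.spectrum_eq, Matrix.map_add _ Complex.ofReal_add,
    map_kronecker Complex.ofReal_mul, map_kronecker Complex.ofReal_mul,
    Matrix.map_one _ Complex.ofReal_zero Complex.ofReal_one,
    Matrix.map_one _ Complex.ofReal_zero Complex.ofReal_one] at hμ
  rw [re_of_mem_spectrum_smul_one_add_smul_rotationGenerator
    (spectrum_kronecker_one_add_one_kronecker_subset _ hnil hμ)]
  exact hr

/-- a function `u(s) = P(s) (1 + c cos(ξ s) + d sin(ξ s)) e^{-rs}`, with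
`P(s) = ∑_{k=0}^p a_k s^k`, `r > 0` and `ξ, c, d ≥ 0`, admits a matrix-exponential
representation `u(s) = ⟨A_u | exp (-s B_u)⟩` with `(3p+3) × (3p+3)` real matrices, where
every complex eigenvalue of `B_u` has strictly positive real part. -/
theorem stmt1 (p : ℕ) (r ξ c d : ℝ) (hr : 0 < r) (hξ : 0 ≤ ξ) (hc : 0 ≤ c) (hd : 0 ≤ d)
    (a : Fin (p + 1) → ℝ) :
    ∃ (Au Bu : Matrix (Fin (3 * p + 3)) (Fin (3 * p + 3)) ℝ),
      (∀ μ ∈ spectrum ℂ (Bu.map (Complex.ofReal)), 0 < μ.re) ∧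
      ∀ s : ℝ, 0 ≤ s →
        (∑ k : Fin (p + 1), a k * s ^ (k : ℕ)) *
            (1 + c * Real.cos (ξ * s) + d * Real.sin (ξ * s)) * Real.exp (-r * s) =
          Matrix.trace (Auᵀ * NormedSpace.exp (-(s • Bu))) :=
  stmt1_general p r ξ c d hr a
end

section
/- Let p ≥ 0, r > 0, ξ ∈ ℝ. Let Π be the (p+1)×(p+1) matrix with Π_{k,k} = r for all k and Π_{k,k−1} = −k for k = 1, …, p (indexing by 0, …, p) and all other entries 0, and let B be the 3(p+1)×3(p+1) block matrix with diagonal blocks (Π, Π, Π), block (2,3) equal to ξ·I_{p+1}, block (3,2) equal to −ξ·I_{p+1}, and all other blocks zero. Then every complex eigenvalue of B belongs to the set {r, r + iξ, r − iξ}; in particular every eigenvalue of B has strictly positive real part. -/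
open Matrix Complex

lemma aux_eig (p : ℕ) (r : ℝ) (lam : ℂ) (x : Fin (p + 1) → ℂ)
    (hx : ∀ k : Fin (p + 1),
      ∑ l, (if l = k then (r : ℂ) else if (l : ℕ) + 1 = (k : ℕ) then -((k : ℕ) : ℂ) else 0) * x l
        = lam * x k)
    (hne : x ≠ 0) : lam = (r : ℂ) := by
  by_contra hlr
  apply hne
  have key : ∀ n, ∀ k : Fin (p + 1), (k : ℕ) = n → x k = 0 := by
    intro n
    induction n using Nat.strong_induction_on with
    | _ n ih =>
      intro k hk
      have h1 := hx k
      have hsplit : ∀ l : Fin (p + 1),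
          (if l = k then (r : ℂ) else if (l : ℕ) + 1 = (k : ℕ) then -((k : ℕ) : ℂ) else 0) * x l
          = (if l = k then (r : ℂ) * x l else 0)
            + (if (l : ℕ) + 1 = (k : ℕ) then -((k : ℕ) : ℂ) * x l else 0) := by
        intro l
        by_cases h : l = k
        · subst h; simp
        · by_cases h2 : (l : ℕ) + 1 = (k : ℕ) <;> simp [h, h2]
      rw [Finset.sum_congr rfl fun l _ => hsplit l, Finset.sum_add_distrib,
        Finset.sum_ite_eq' Finset.univ k (fun l => (r : ℂ) * x l)] at h1
      simp only [Finset.mem_univ, if_true] at h1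
      have hzero : ∑ l : Fin (p + 1),
          (if (l : ℕ) + 1 = (k : ℕ) then -((k : ℕ) : ℂ) * x l else 0) = 0 := by
        rcases n with _ | m
        · apply Finset.sum_eq_zero; intro l _
          simp [hk]
        · have hm : m < p + 1 := by have := k.isLt; omega
          have hprev : x ⟨m, hm⟩ = 0 := ih m (by omega) ⟨m, hm⟩ rfl
          apply Finset.sum_eq_zero; intro l _
          by_cases hl : (l : ℕ) + 1 = (k : ℕ)
          · have hlm : l = ⟨m, hm⟩ := Fin.ext (by simp only []; omega)
            rw [if_pos hl, hlm, hprev, mul_zero]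
          · rw [if_neg hl]
      rw [hzero, add_zero] at h1
      have h2 : (lam - r) * x k = 0 := by linear_combination -h1
      rcases mul_eq_zero.1 h2 with h | h
      · exact absurd (sub_eq_zero.1 h) hlr
      · exact h
  funext k
  simp only [Pi.zero_apply]
  exact key k.val k rfl

/-- every complex eigenvalue of the block matrix `B` (diagonal blocks `Π`,
off-diagonal blocks `±ξ·I`) lies in `{r, r + iξ, r - iξ}`; in particular all eigenvalues
of `B` have strictly positive real part. -/
theorem stmt8 (p : ℕ) (r ξ : ℝ) (hr : 0 < r)
    (Pi' : Matrix (Fin (p + 1)) (Fin (p + 1)) ℝ)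
    (hPi : Pi' = Matrix.of fun (k l : Fin (p + 1)) =>
      if l = k then r else if (l : ℕ) + 1 = (k : ℕ) then -((k : ℕ) : ℝ) else 0)
    (B : Matrix (Fin 3 × Fin (p + 1)) (Fin 3 × Fin (p + 1)) ℝ)
    (hB : B = Matrix.of fun (ik jl : Fin 3 × Fin (p + 1)) =>
      if ik.1 = jl.1 then Pi' ik.2 jl.2
      else if ik.1 = 1 ∧ jl.1 = 2 then (if ik.2 = jl.2 then ξ else 0)
      else if ik.1 = 2 ∧ jl.1 = 1 then (if ik.2 = jl.2 then -ξ else 0)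
      else 0) :
    (∀ μ ∈ spectrum ℂ (B.map (Complex.ofReal)),
      μ = (r : ℂ) ∨ μ = (r : ℂ) + ξ * Complex.I ∨ μ = (r : ℂ) - ξ * Complex.I) ∧
    (∀ μ ∈ spectrum ℂ (B.map (Complex.ofReal)), 0 < μ.re) := by
  have main : ∀ μ ∈ spectrum ℂ (B.map (Complex.ofReal)),
      μ = (r : ℂ) ∨ μ = (r : ℂ) + ξ * Complex.I ∨ μ = (r : ℂ) - ξ * Complex.I := by
    intro μ hμ
    set Bc := B.map (Complex.ofReal) with hBc
    rw [spectrum.mem_iff] at hμ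
    have hdet : (algebraMap ℂ (Matrix (Fin 3 × Fin (p + 1)) (Fin 3 × Fin (p + 1)) ℂ) μ - Bc).det = 0 := by
      by_contra hd
      exact hμ ((Matrix.isUnit_iff_isUnit_det _).2 (isUnit_iff_ne_zero.2 hd))
    obtain ⟨w, hw0, hw⟩ := (Matrix.exists_mulVec_eq_zero_iff).2 hdet
    have hBw : Bc.mulVec w = μ • w := by
      have h := hw
      rw [Matrix.sub_mulVec, Algebra.algebraMap_eq_smul_one, Matrix.smul_mulVec,
        Matrix.one_mulVec, sub_eq_zero] at h
      exact h.symm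
    have hcomp : ∀ (i : Fin 3) (k : Fin (p + 1)),
        ∑ j : Fin 3, ∑ l : Fin (p + 1), Bc (i, k) (j, l) * w (j, l) = μ * w (i, k) := by
      intro i k
      have h := congrFun hBw (i, k)
      rw [Matrix.mulVec, dotProduct, Fintype.sum_prod_type] at h
      simpa using h
    have hPc : ∀ k l : Fin (p + 1), ((Pi' k l : ℝ) : ℂ)
        = (if l = k then (r : ℂ) else if (l : ℕ) + 1 = (k : ℕ) then -((k : ℕ) : ℂ) else 0) := by
      intro k l
      rw [hPi]
      simp only [Matrix.of_apply]
      split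
      · rfl
      · split <;> push_cast <;> simp
    set w0 : Fin (p + 1) → ℂ := fun k => w (0, k) with hw0def
    set w1 : Fin (p + 1) → ℂ := fun k => w (1, k) with hw1def
    set w2 : Fin (p + 1) → ℂ := fun k => w (2, k) with hw2def
    have hBe : ∀ (i : Fin 3) (k : Fin (p+1)) (j : Fin 3) (l : Fin (p+1)),
        Bc (i, k) (j, l) = ((B (i,k) (j,l) : ℝ) : ℂ) := by
      intro i k j l; rw [hBc, Matrix.map_apply]
    have h0 : ∀ k, ∑ l, ((Pi' k l : ℝ) : ℂ) * w0 l = μ * w0 k := by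
      intro k
      have h := hcomp 0 k
      rw [Fin.sum_univ_three] at h
      simp only [hBe, hB, Matrix.of_apply] at h
      norm_num at h
      simpa using h
    have h1 : ∀ k, ∑ l, ((Pi' k l : ℝ) : ℂ) * w1 l = μ * w1 k - (ξ : ℂ) * w2 k := by
      intro k
      have h := hcomp 1 k
      rw [Fin.sum_univ_three] at h
      simp only [hBe, hB, Matrix.of_apply] at h
      norm_num [apply_ite Complex.ofReal, Finset.sum_ite_eq' Finset.univ k, (by decide : (0:Fin 3) ≠ 1), (by decide : (0:Fin 3) ≠ 2), (by decide : (1:Fin 3) ≠ 0), (by decide : (1:Fin 3) ≠ 2), (by decide : (2:Fin 3) ≠ 0), (by decide : (2:Fin 3) ≠ 1)] at h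
      linear_combination h
    have h2 : ∀ k, ∑ l, ((Pi' k l : ℝ) : ℂ) * w2 l = μ * w2 k + (ξ : ℂ) * w1 k := by
      intro k
      have h := hcomp 2 k
      rw [Fin.sum_univ_three] at h
      simp only [hBe, hB, Matrix.of_apply] at h
      norm_num [apply_ite Complex.ofReal, Finset.sum_ite_eq' Finset.univ k, (by decide : (0:Fin 3) ≠ 1), (by decide : (0:Fin 3) ≠ 2), (by decide : (1:Fin 3) ≠ 0), (by decide : (1:Fin 3) ≠ 2), (by decide : (2:Fin 3) ≠ 0), (by decide : (2:Fin 3) ≠ 1)] at h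
      linear_combination h
    by_cases hz0 : w0 = 0
    · -- w0 = 0, look at u = w1 + I w2 and v = w1 - I w2
      set u : Fin (p + 1) → ℂ := fun k => w1 k + Complex.I * w2 k with hudef
      set v : Fin (p + 1) → ℂ := fun k => w1 k - Complex.I * w2 k with hvdef
      have hu : ∀ k, ∑ l, ((Pi' k l : ℝ) : ℂ) * u l = (μ + (ξ : ℂ) * Complex.I) * u k := by
        intro k
        have e1 := h1 k
        have e2 := h2 k
        have hsum : ∑ l, ((Pi' k l : ℝ) : ℂ) * u l
            = (∑ l, ((Pi' k l : ℝ) : ℂ) * w1 l) + Complex.I * ∑ l, ((Pi' k l : ℝ) : ℂ) * w2 l := by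
          rw [Finset.mul_sum, ← Finset.sum_add_distrib]
          refine Finset.sum_congr rfl fun l _ => by simp only [hudef]; ring
        rw [hsum, e1, e2]
        simp only [hudef]
        linear_combination (-(↑ξ : ℂ) * w2 k) * Complex.I_sq
      have hv : ∀ k, ∑ l, ((Pi' k l : ℝ) : ℂ) * v l = (μ - (ξ : ℂ) * Complex.I) * v k := by
        intro k
        have e1 := h1 k
        have e2 := h2 k
        have hsum : ∑ l, ((Pi' k l : ℝ) : ℂ) * v l
            = (∑ l, ((Pi' k l : ℝ) : ℂ) * w1 l) - Complex.I * ∑ l, ((Pi' k l : ℝ) : ℂ) * w2 l := by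
          rw [Finset.mul_sum, ← Finset.sum_sub_distrib]
          refine Finset.sum_congr rfl fun l _ => by simp only [hvdef]; ring
        rw [hsum, e1, e2]
        simp only [hvdef]
        linear_combination (-(↑ξ : ℂ) * w2 k) * Complex.I_sq
      by_cases hzu : u = 0
      · by_cases hzv : v = 0
        · exfalso
          apply hw0
          funext ik
          obtain ⟨i, k⟩ := ik
          have hu0 : u k = 0 := congrFun hzu k
          have hv0 : v k = 0 := congrFun hzv k
          simp only [hudef, hvdef] at hu0 hv0
          have hw1k : w1 k = 0 := by linear_combination (hu0 + hv0) / 2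
          have hw2k : w2 k = 0 := by
            have hI : Complex.I ≠ 0 := Complex.I_ne_zero
            have : Complex.I * w2 k = 0 := by linear_combination (hu0 - hv0) / 2
            rcases mul_eq_zero.1 this with h | h
            · exact absurd h hI
            · exact h
          fin_cases i
          · exact congrFun hz0 k
          · exact hw1k
          · exact hw2k
        · -- v ≠ 0 : eigenvalue μ - ξ I = r, so μ = r + ξ I
          right; left
          have := aux_eig p r (μ - (ξ : ℂ) * Complex.I) v
            (fun k => by simp only [← hPc]; exact hv k) hzv
          linear_combination this
      · -- u ≠ 0 : eigenvalue μ + ξ I = r, so μ = r - ξ I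
        right; right
        have := aux_eig p r (μ + (ξ : ℂ) * Complex.I) u
          (fun k => by simp only [← hPc]; exact hu k) hzu
        linear_combination this
    · left
      exact aux_eig p r μ w0 (fun k => by simp only [← hPc]; exact h0 k) hz0
  refine ⟨main, fun μ hμ => ?_⟩
  rcases main μ hμ with h | h | h <;> subst h <;> simp [hr]
end

section
/- Let B be a real p×p matrix such that every complex eigenvalue of B has strictly positive real part. Then B is invertible and the improper integral ∫_0^∞ exp(−sB) ds converges (entrywise) and equals B^{−1}. -/
/-!
Let `A = B` viewed as a complex matrix. On the generalized eigenspace of an eigenvalue `μ`,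
`exp (-sA) = e^{-sμ} exp (-s(A - μ))` with `A - μ` nilpotent, so `exp (-sA) v` is `e^{-sμ}` times
a polynomial in `s`, hence `O(e^{-cs})` for every `c < re μ`. These eigenspaces span `ℂⁿ`, so for
`c` below the least real part of an eigenvalue every entry of `exp (-sB)` is `O(e^{-cs})`. It is
therefore integrable on `(0, ∞)`, and as `-exp (-sB) B⁻¹` is an antiderivative of `exp (-sB)`
vanishing at infinity, the integral is `B⁻¹`.
-/

open Matrix MeasureTheory

open Filter Asymptotics Topology NormedSpace

theorem tendsto_zero_of_isBigO_exp_neg {E : Type*} [NormedAddCommGroup E] {f : ℝ → E} {b : ℝ}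
    (hb : 0 < b) (ho : f =O[atTop] fun x => Real.exp (-b * x)) : Tendsto f atTop (𝓝 0) :=
  ho.trans_tendsto <|
    Real.tendsto_exp_atBot.comp (tendsto_id.const_mul_atTop_of_neg (neg_neg_iff_pos.mpr hb))

namespace Matrix

variable {n : Type*} [Fintype n] [DecidableEq n]

theorem isUnit_of_isUnit_map {K R : Type*} [Field K] [CommRing R] [Nontrivial R] (f : K →+* R)
    {M : Matrix n n K} (h : IsUnit (M.map f)) : IsUnit M := by
  rw [isUnit_iff_isUnit_det] at h ⊢
  rwa [← f.mapMatrix_apply, ← RingHom.map_det, isUnit_map_iff] at h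

theorem continuous_exp_neg_smul (B : Matrix n n ℝ) : Continuous fun s : ℝ => exp (-(s • B)) := by
  open scoped Matrix.Norms.Operator in
  exact exp_continuous.comp (continuous_id.smul continuous_const).neg

theorem exp_map_ofReal (M : Matrix n n ℝ) :
    exp (M.map Complex.ofReal) = (exp M).map Complex.ofReal := by
  open scoped Matrix.Norms.Operator in
  exact (map_exp Complex.ofRealHom.mapMatrix
    (continuous_id.matrix_map Complex.continuous_ofReal) M).symm

theorem exp_mulVec_eq_sum_of_pow_mulVec_eq_zero {𝕂 : Type*} [RCLike 𝕂] {N : Matrix n n 𝕂}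
    {v : n → 𝕂} {K : ℕ} (hv : (N ^ K) *ᵥ v = 0) :
    exp N *ᵥ v = ∑ k ∈ Finset.range K, (k.factorial⁻¹ : 𝕂) • ((N ^ k) *ᵥ v) := by
  have hsummable : Summable fun k => (k.factorial⁻¹ : 𝕂) • N ^ k := by
    open scoped Matrix.Norms.Operator in exact expSeries_summable' N
  have hvanish : ∀ k ∉ Finset.range K, (k.factorial⁻¹ : 𝕂) • ((N ^ k) *ᵥ v) = 0 := by
    intro k hk
    rw [← Nat.sub_add_cancel (not_lt.mp (Finset.mem_range.not.mp hk)), pow_add,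
      ← mulVec_mulVec, hv, mulVec_zero, smul_zero]
  rw [exp_eq_tsum 𝕂, ← tsum_eq_sum (L := .unconditional ℕ) hvanish]
  exact (hsummable.map_tsum (mulVec.addMonoidHomLeft v)
    (continuous_id.matrix_mulVec continuous_const)).trans (tsum_congr fun _ => smul_mulVec _ _ _)

theorem exp_eq_cexp_smul_exp_sub (A : Matrix n n ℂ) (μ : ℂ) :
    exp A = Complex.exp μ • exp (A - μ • 1) := by
  have hcomm : Commute (μ • (1 : Matrix n n ℂ)) (A - μ • 1) :=
    (Commute.one_left _).smul_left μ
  conv_lhs => rw [← add_sub_cancel (μ • (1 : Matrix n n ℂ)) A]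
  rw [Matrix.exp_add_of_commute _ _ hcomm, smul_one_eq_diagonal, exp_diagonal, Pi.exp_def,
    ← smul_one_eq_diagonal, smul_one_mul, Complex.exp_eq_exp_ℂ]

theorem exp_smul_mulVec_eq_of_pow_sub_mulVec_eq_zero {A : Matrix n n ℂ} {μ : ℂ} {v : n → ℂ}
    {K : ℕ} (hv : ((A - μ • 1) ^ K) *ᵥ v = 0) (t : ℂ) :
    exp (t • A) *ᵥ v = Complex.exp (t * μ) •
      ∑ k ∈ Finset.range K, (t ^ k / k.factorial) • ((A - μ • 1) ^ k *ᵥ v) := by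
  have hsub : t • A - (t * μ) • 1 = t • (A - μ • 1) := by
    rw [smul_sub, smul_smul]
  have htv : ((t • (A - μ • 1)) ^ K) *ᵥ v = 0 := by
    rw [smul_pow, smul_mulVec, hv, smul_zero]
  rw [exp_eq_cexp_smul_exp_sub _ (t * μ), hsub, smul_mulVec,
    exp_mulVec_eq_sum_of_pow_mulVec_eq_zero htv]
  congr 1
  refine Finset.sum_congr rfl fun k _ => ?_
  rw [smul_pow, smul_mulVec, smul_smul, div_eq_inv_mul]

theorem isBigO_exp_neg_smul_mulVec_of_pow_sub_mulVec_eq_zero {A : Matrix n n ℂ} {μ : ℂ}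
    {v : n → ℂ} {K : ℕ} (hv : ((A - μ • 1) ^ K) *ᵥ v = 0) {c : ℝ} (hc : c < μ.re) :
    (fun s : ℝ => exp (-(s • A)) *ᵥ v) =O[atTop] fun s => Real.exp (-c * s) := by
  have hexp : (fun s : ℝ => Complex.exp (-s * μ)) =O[atTop] fun s => Real.exp (-μ.re * s) :=
    isBigO_of_le _ fun s => by simp [Complex.norm_exp, mul_comm]
  have hpoly : ∀ k : ℕ, (fun s : ℝ => ((-s : ℂ) ^ k / k.factorial) • ((A - μ • 1) ^ k *ᵥ v))
      =O[atTop] fun s => Real.exp ((μ.re - c) * s) := by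
    intro k
    refine IsBigO.trans (isBigO_of_le' (c := ‖(A - μ • 1) ^ k *ᵥ v‖ / k.factorial)
      (g := fun s : ℝ => s ^ k) _ fun s => le_of_eq ?_)
      (isLittleO_pow_exp_pos_mul_atTop k (sub_pos.mpr hc)).isBigO
    simp only [norm_smul, Complex.norm_div, norm_pow, norm_neg, Complex.norm_real,
      Real.norm_eq_abs, RCLike.norm_natCast]
    ring
  have hprod := hexp.smul (IsBigO.sum fun k (_ : k ∈ Finset.range K) => hpoly k)
  refine hprod.congr' (Eventually.of_forall fun s => ?_) (Eventually.of_forall fun s => ?_)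
  · have hs : -(s • A) = (-s : ℂ) • A := by rw [neg_smul, Complex.coe_smul]
    simp only [hs, exp_smul_mulVec_eq_of_pow_sub_mulVec_eq_zero hv, Finset.sum_apply]
  · simp only [smul_eq_mul, ← Real.exp_add]
    ring_nf

def expDecaySubmodule (A : Matrix n n ℂ) (c : ℝ) : Submodule ℂ (n → ℂ) where
  carrier := {v | (fun s : ℝ => exp (-(s • A)) *ᵥ v) =O[atTop] fun s => Real.exp (-c * s)}
  add_mem' hv hw := (hv.add hw).congr_left fun _ => (mulVec_add _ _ _).symm
  zero_mem' := (isBigO_zero _ _).congr_left fun _ => (mulVec_zero _).symm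
  smul_mem' a v hv := (hv.const_smul_left a).congr_left fun _ => (mulVec_smul _ a v).symm

theorem maxGenEigenspace_le_expDecaySubmodule {A : Matrix n n ℂ} {c : ℝ}
    (hc : ∀ μ ∈ spectrum ℂ A, c < μ.re) (μ : ℂ) :
    Module.End.maxGenEigenspace (toLin' A) μ ≤ expDecaySubmodule A c := by
  by_cases hbot : Module.End.maxGenEigenspace (toLin' A) μ = ⊥
  · exact hbot ▸ bot_le
  have hμ : μ ∈ spectrum ℂ A := by
    rw [← spectrum_toLin']
    exact ((Module.End.hasUnifEigenvalue_iff_hasUnifEigenvalue_one (by simp)).mp hbot).mem_spectrum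
  intro v hv
  obtain ⟨K, hK⟩ := (Module.End.mem_maxGenEigenspace _ _ _).mp hv
  refine isBigO_exp_neg_smul_mulVec_of_pow_sub_mulVec_eq_zero (K := K) ?_ (hc μ hμ)
  rwa [← toLin'_apply, toLin'_pow, map_sub, map_smul, toLin'_one, ← Module.End.one_eq_id]

theorem expDecaySubmodule_eq_top {A : Matrix n n ℂ} {c : ℝ} (hc : ∀ μ ∈ spectrum ℂ A, c < μ.re) :
    expDecaySubmodule A c = ⊤ :=
  eq_top_iff.mpr <| (Module.End.iSup_maxGenEigenspace_eq_top (toLin' A)).symm.le.trans <|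
    iSup_le (maxGenEigenspace_le_expDecaySubmodule hc)

theorem exists_isBigO_exp_neg_smul_apply {B : Matrix n n ℝ}
    (hB : ∀ μ ∈ spectrum ℂ (B.map Complex.ofReal), 0 < μ.re) :
    ∃ c > 0, ∀ i j : n,
      (fun s : ℝ => exp (-(s • B)) i j) =O[atTop] fun s => Real.exp (-c * s) := by
  obtain ⟨a, ha, hle⟩ := (finite_spectrum (B.map Complex.ofReal)).isCompact.exists_forall_le'
    Complex.continuous_re.continuousOn hB
  have htop := expDecaySubmodule_eq_top fun μ hμ => (half_lt_self ha).trans_le (hle μ hμ)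
  refine ⟨a / 2, half_pos ha, fun i j => ?_⟩
  have hcol : Pi.single j 1 ∈ expDecaySubmodule (B.map Complex.ofReal) (a / 2) :=
    htop ▸ Submodule.mem_top
  refine IsBigO.trans (isBigO_of_le _ fun s => ?_) hcol
  have hmap : -(s • B.map Complex.ofReal) = (-(s • B)).map Complex.ofReal := by
    ext; simp
  rw [hmap, exp_map_ofReal]
  calc ‖exp (-(s • B)) i j‖ = ‖((exp (-(s • B))).map Complex.ofReal *ᵥ Pi.single j 1) i‖ := by
        simp
    _ ≤ _ := norm_le_pi_norm _ i

theorem hasDerivAt_neg_exp_neg_smul_mul_inv_apply {B : Matrix n n ℝ} (hB : IsUnit B) (i j : n)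
    (s : ℝ) : HasDerivAt (fun s : ℝ => -(exp (-(s • B)) * B⁻¹) i j) (exp (-(s • B)) i j) s := by
  open scoped Matrix.Norms.Operator in
  have hmat := ((hasDerivAt_exp_smul_const (-B) s).mul_const B⁻¹).neg
  have hentry :=
    (LinearMap.toContinuousLinearMap (entryLinearMap ℝ ℝ i j)).hasFDerivAt.comp_hasDerivAt s hmat
  simp only [Matrix.mul_assoc, neg_mul, mul_neg, neg_neg, smul_neg, Matrix.mul_one,
    mul_nonsing_inv B ((isUnit_iff_isUnit_det B).mp hB)] at hentry
  exact hentry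

theorem integral_Ioi_exp_neg_smul_apply {B : Matrix n n ℝ} (hB : IsUnit B)
    (hlim : Tendsto (fun s : ℝ => exp (-(s • B))) atTop (𝓝 0)) {i j : n}
    (hint : IntegrableOn (fun s : ℝ => exp (-(s • B)) i j) (Set.Ioi 0)) :
    ∫ s in Set.Ioi (0 : ℝ), exp (-(s • B)) i j = B⁻¹ i j := by
  have hlim' : Tendsto (fun s : ℝ => -(exp (-(s • B)) * B⁻¹) i j) atTop (𝓝 0) := by
    have hcont : Continuous fun M : Matrix n n ℝ => -(M * B⁻¹) i j :=
      ((continuous_id.matrix_mul continuous_const).matrix_elem i j).neg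
    simpa [Function.comp_def] using (hcont.tendsto 0).comp hlim
  rw [integral_Ioi_of_hasDerivAt_of_tendsto'
    (fun s _ => hasDerivAt_neg_exp_neg_smul_mul_inv_apply hB i j s) hint hlim']
  simp

end Matrix

/-- if every complex eigenvalue of `B` has strictly positive real part, then
`B` is invertible and the improper integral `∫_0^∞ exp (-sB) ds` converges entrywise
and equals `B⁻¹`. -/
theorem stmt11 (p : ℕ) (B : Matrix (Fin p) (Fin p) ℝ)
    (hB : ∀ μ ∈ spectrum ℂ (B.map (Complex.ofReal)), 0 < μ.re) :
    IsUnit B ∧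
    (∀ i j : Fin p, IntegrableOn (fun s : ℝ => NormedSpace.exp (-(s • B)) i j)
      (Set.Ioi (0 : ℝ))) ∧
    (∀ i j : Fin p,
      ∫ s in Set.Ioi (0 : ℝ), NormedSpace.exp (-(s • B)) i j = B⁻¹ i j) := by
  have hunit : IsUnit B := isUnit_of_isUnit_map Complex.ofRealHom <|
    (spectrum.zero_notMem_iff ℂ).mp fun h0 => (hB 0 h0).false
  obtain ⟨c, hc, hdecay⟩ := exists_isBigO_exp_neg_smul_apply hB
  have hint : ∀ i j : Fin p, IntegrableOn (fun s : ℝ => exp (-(s • B)) i j) (Set.Ioi 0) :=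
    fun i j => integrable_of_isBigO_exp_neg hc
      ((continuous_exp_neg_smul B).matrix_elem i j).continuousOn (hdecay i j)
  have hlim : Tendsto (fun s : ℝ => exp (-(s • B))) atTop (𝓝 0) :=
    tendsto_pi_nhds.mpr fun i => tendsto_pi_nhds.mpr fun j =>
      tendsto_zero_of_isBigO_exp_neg hc (hdecay i j)
  exact ⟨hunit, hint, fun i j => integral_Ioi_exp_neg_smul_apply hunit hlim (hint i j)⟩
end

section
/- Let B be a real p×p matrix and r > 0 such that every complex eigenvalue of B has real part at least r. Then there exists a constant M ≥ 0 such that for all t ≥ 0 and all indices i, j, the (i,j) entry of exp(−tB) satisfies |exp(−tB)_{ij}| ≤ M·e^{−(r/2)t}. -/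
/-!
Over `ℂ` every vector is a sum of generalized eigenvectors of `B`. On a generalized eigenvector
`v` for `μ`, with `(B - μ)^k v = 0`, the exponential series truncates:
`exp (-tB) v = e^{-tμ} ∑_{m<k} (-t)^m / m! (B - μ)^m v`. Since `t^m / m! ≤ ε^{-m} e^{εt}` with
`ε = Re μ - r/2 > 0`, each such vector decays like `e^{-(r/2)t}`, and the vectors decaying at a
given rate form a submodule, which is therefore everything. The columns of `exp (-tB)` are its
values on the standard basis.
-/

open Matrix NormedSpace Finset
open scoped Nat

lemma Real.pow_div_factorial_le_inv_pow_mul_exp {ε t : ℝ} (hε : 0 < ε) (ht : 0 ≤ t) (m : ℕ) :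
    t ^ m / m ! ≤ ε⁻¹ ^ m * Real.exp (ε * t) := by
  calc t ^ m / m ! = ε⁻¹ ^ m * ((ε * t) ^ m / m !) := by
        rw [mul_pow, ← mul_div_assoc, ← mul_assoc, ← mul_pow, inv_mul_cancel₀ hε.ne', one_pow,
          one_mul]
    _ ≤ ε⁻¹ ^ m * Real.exp (ε * t) := by
        gcongr; exact Real.pow_div_factorial_le_exp _ (by positivity) m

variable {n : Type*} [Fintype n] [DecidableEq n]

theorem Matrix.exp_map_ofReal_s12 (A : Matrix n n ℝ) :
    (exp A).map ((↑) : ℝ → ℂ) = exp (A.map (↑)) :=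
  open scoped Matrix.Norms.Operator in
  map_exp (Complex.ofRealHom.mapMatrix : Matrix n n ℝ →+* Matrix n n ℂ)
    (continuous_id.matrix_map Complex.continuous_ofReal) A

theorem Matrix.exp_mulVec_of_pow_mulVec_eq_zero {𝕂 : Type*} [RCLike 𝕂] {N : Matrix n n 𝕂}
    {v : n → 𝕂} {k : ℕ} (hv : N ^ k *ᵥ v = 0) :
    exp N *ᵥ v = ∑ m ∈ range k, (m ! : 𝕂)⁻¹ • (N ^ m *ᵥ v) := by
  open scoped Matrix.Norms.Operator in
  have hsum : HasSum (fun m => ((m ! : 𝕂)⁻¹ • N ^ m) *ᵥ v) (exp N *ᵥ v) :=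
    (exp_series_hasSum_exp' (𝕂 := 𝕂) N).map (mulVec.addMonoidHomLeft v)
      (continuous_id.matrix_mulVec continuous_const)
  simp only [smul_mulVec] at hsum
  refine hsum.unique (hasSum_sum_of_ne_finset_zero fun m hm => ?_)
  rw [← Nat.sub_add_cancel (not_lt.mp (mt mem_range.mpr hm)), pow_add, ← mulVec_mulVec, hv,
    mulVec_zero, smul_zero]

theorem Matrix.exp_smul_one_add {𝕂 : Type*} [RCLike 𝕂] (c : 𝕂) (X : Matrix n n 𝕂) :
    exp (c • 1 + X) = exp c • exp X := by
  rw [Matrix.exp_add_of_commute _ _ ((Commute.one_left X).smul_left c), smul_one_eq_diagonal,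
    exp_diagonal, Pi.exp_def, ← smul_one_eq_diagonal, smul_one_mul]

def Matrix.expDecaySubmodule_s12 (A : Matrix n n ℂ) (s : ℝ) : Submodule ℂ (n → ℂ) where
  carrier := {v | ∃ K, 0 ≤ K ∧ ∀ t : ℝ, 0 ≤ t →
    ‖exp (-((t : ℂ) • A)) *ᵥ v‖ ≤ K * Real.exp (-s * t)}
  zero_mem' := ⟨0, le_rfl, fun t _ => by simp⟩
  add_mem' := by
    rintro v w ⟨K, hK, hv⟩ ⟨L, hL, hw⟩
    refine ⟨K + L, add_nonneg hK hL, fun t ht => ?_⟩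
    rw [mulVec_add, add_mul]
    exact (norm_add_le _ _).trans (add_le_add (hv t ht) (hw t ht))
  smul_mem' := by
    rintro c v ⟨K, hK, hv⟩
    refine ⟨‖c‖ * K, by positivity, fun t ht => ?_⟩
    rw [mulVec_smul, norm_smul, mul_assoc]
    exact mul_le_mul_of_nonneg_left (hv t ht) (norm_nonneg c)

theorem Matrix.mem_expDecaySubmodule_of_pow_mulVec_eq_zero {A : Matrix n n ℂ} {μ : ℂ} {s : ℝ}
    (hs : s < μ.re) {v : n → ℂ} {k : ℕ} (hv : (A - μ • 1) ^ k *ᵥ v = 0) :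
    v ∈ A.expDecaySubmodule_s12 s := by
  set N := A - μ • 1
  set ε := μ.re - s with hε_def
  have hε : 0 < ε := sub_pos.mpr hs
  refine ⟨∑ m ∈ range k, ε⁻¹ ^ m * ‖N ^ m *ᵥ v‖, by positivity, fun t ht => ?_⟩
  have hsplit : -((t : ℂ) • A) = (-(t * μ)) • 1 + (-(t : ℂ)) • N := by
    simp only [N, smul_sub, smul_smul]; module
  have htrunc :
      exp ((-(t : ℂ)) • N) *ᵥ v = ∑ m ∈ range k, (m ! : ℂ)⁻¹ • ((-(t : ℂ)) • N) ^ m *ᵥ v :=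
    exp_mulVec_of_pow_mulVec_eq_zero (by rw [smul_pow, smul_mulVec, hv, smul_zero])
  have hscale : Real.exp (-(t * μ.re)) * Real.exp (ε * t) = Real.exp (-s * t) := by
    rw [← Real.exp_add, hε_def]; ring_nf
  calc ‖exp (-((t : ℂ) • A)) *ᵥ v‖
      = Real.exp (-(t * μ.re)) * ‖∑ m ∈ range k, (m ! : ℂ)⁻¹ • ((-(t : ℂ)) • N) ^ m *ᵥ v‖ := by
        rw [hsplit, exp_smul_one_add, smul_mulVec, norm_smul, htrunc, ← Complex.exp_eq_exp_ℂ,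
          Complex.norm_exp]
        simp
    _ ≤ Real.exp (-(t * μ.re)) * ∑ m ∈ range k, t ^ m / m ! * ‖N ^ m *ᵥ v‖ := by
        gcongr
        refine (norm_sum_le _ _).trans (sum_le_sum fun m _ => ?_)
        rw [smul_pow, smul_mulVec, smul_smul, norm_smul]
        simp [abs_of_nonneg ht, div_eq_inv_mul]
    _ ≤ Real.exp (-(t * μ.re)) *
          ∑ m ∈ range k, ε⁻¹ ^ m * Real.exp (ε * t) * ‖N ^ m *ᵥ v‖ := by
        gcongr with m
        exact Real.pow_div_factorial_le_inv_pow_mul_exp hε ht m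
    _ = (∑ m ∈ range k, ε⁻¹ ^ m * ‖N ^ m *ᵥ v‖) * Real.exp (-s * t) := by
        rw [mul_sum, sum_mul]
        refine sum_congr rfl fun m _ => ?_
        linear_combination (ε⁻¹ ^ m * ‖N ^ m *ᵥ v‖) * hscale

theorem Matrix.expDecaySubmodule_eq_top_s12 {A : Matrix n n ℂ} {s : ℝ}
    (hA : ∀ μ ∈ spectrum ℂ A, s < μ.re) : A.expDecaySubmodule_s12 s = ⊤ := by
  rw [eq_top_iff, ← Module.End.iSup_maxGenEigenspace_eq_top (toLinAlgEquiv' A)]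
  refine iSup_le fun μ v hv => ?_
  obtain ⟨k, hk⟩ := (Module.End.mem_maxGenEigenspace _ _ _).mp hv
  have hk' : (A - μ • 1) ^ k *ᵥ v = 0 := by
    rw [← toLinAlgEquiv'_apply, map_pow, map_sub, map_smul, map_one]
    exact hk
  by_cases hv0 : v = 0
  · exact hv0 ▸ zero_mem _
  have hμ : Module.End.HasEigenvalue (toLinAlgEquiv' A) μ :=
    Module.End.hasEigenvalue_of_hasGenEigenvalue (k := k)
      ((Submodule.ne_bot_iff _).mpr ⟨v, Module.End.mem_genEigenspace_nat.mpr hk, hv0⟩)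
  refine mem_expDecaySubmodule_of_pow_mulVec_eq_zero (hA μ ?_) hk'
  exact AlgEquiv.spectrum_eq toLinAlgEquiv' A ▸ hμ.mem_spectrum

/-- if every complex eigenvalue of `B` has real part at least `r > 0`, then
there is an `M ≥ 0` such that every entry of `exp (-tB)` is bounded by `M e^{-(r/2)t}`
for all `t ≥ 0`. -/
theorem stmt12 (p : ℕ) (B : Matrix (Fin p) (Fin p) ℝ) (r : ℝ) (hr : 0 < r)
    (hB : ∀ μ ∈ spectrum ℂ (B.map (Complex.ofReal)), r ≤ μ.re) :
    ∃ M : ℝ, 0 ≤ M ∧ ∀ t : ℝ, 0 ≤ t → ∀ i j : Fin p,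
      |NormedSpace.exp (-(t • B)) i j| ≤ M * Real.exp (-(r / 2) * t) := by
  have hdecay : (B.map (↑)).expDecaySubmodule_s12 (r / 2) = ⊤ :=
    expDecaySubmodule_eq_top_s12 fun μ hμ => (half_lt_self hr).trans_le (hB μ hμ)
  choose K hK0 hK using fun j : Fin p => hdecay.ge (Submodule.mem_top (x := Pi.single j 1))
  refine ⟨∑ j, K j, sum_nonneg fun j _ => hK0 j, fun t ht i j => ?_⟩
  have hmap : exp (-((t : ℂ) • B.map ((↑) : ℝ → ℂ))) = (exp (-(t • B))).map (↑) := by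
    rw [exp_map_ofReal_s12]
    congr 1
    ext
    simp
  have hentry :
      |exp (-(t • B)) i j| = ‖(exp (-((t : ℂ) • B.map ((↑) : ℝ → ℂ))) *ᵥ Pi.single j 1) i‖ := by
    rw [mulVec_single_one, col_apply, hmap, map_apply, Complex.norm_real, Real.norm_eq_abs]
  calc |exp (-(t • B)) i j| ≤ K j * Real.exp (-(r / 2) * t) :=
        hentry ▸ (norm_le_pi_norm _ i).trans (hK j t ht)
    _ ≤ (∑ j, K j) * Real.exp (-(r / 2) * t) := by
        gcongr; exact single_le_sum (fun j _ => hK0 j) (mem_univ j)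
end

section
/- Let Φ be a d×d real matrix with nonnegative entries whose spectral radius is strictly smaller than 1. Then there exist a vector κ ∈ ℝ^d with all coordinates strictly positive and a constant ρ ∈ [0,1) such that, componentwise, Φᵀ κ ≤ ρ·κ. -/
/-!
Choose `s` with `r(Φ) < s < 1`. By Gelfand's formula `‖(Φ / s)ⁿ‖` decays geometrically, so the
Neumann series `N = ∑ₙ (Φ / s)ⁿ` converges; it has nonnegative entries and satisfies
`N (Φ / s) = N - 1`. The column sums `κ = 1ᵀ N` are therefore at least `1` and satisfy
`Φᵀ κ = s (κ - 1) ≤ s κ`.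
-/

open Matrix Filter
open scoped ENNReal NNReal

section BanachAlgebra

variable {A : Type*} [NormedRing A] [NormedAlgebra ℂ A] [CompleteSpace A]

theorem eventually_norm_pow_le_of_spectralRadius_lt {a : A} {r : ℝ≥0}
    (h : spectralRadius ℂ a < r) : ∀ᶠ n : ℕ in atTop, ‖a ^ n‖ ≤ r ^ n := by
  filter_upwards [(spectrum.pow_nnnorm_pow_one_div_tendsto_nhds_spectralRadius a).eventually_lt_const
    h, eventually_ne_atTop 0] with n hn hn0
  have : (‖a ^ n‖₊ : ℝ≥0∞) ≤ (r : ℝ≥0∞) ^ n := by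
    rw [← ENNReal.rpow_inv_natCast_pow (x := ‖a ^ n‖₊) hn0]
    gcongr
    simpa [one_div] using hn.le
  exact_mod_cast this

theorem summable_smul_pow_of_spectralRadius_lt {a : A} {r : ℝ≥0}
    (h : spectralRadius ℂ a < r) : Summable fun n : ℕ ↦ ((r : ℂ)⁻¹ • a) ^ n := by
  obtain ⟨u, hau, hur⟩ := ENNReal.lt_iff_exists_nnreal_btwn.mp h
  have hur : (u : ℝ) < r := by exact_mod_cast hur
  have hr : (0 : ℝ) < r := u.coe_nonneg.trans_lt hur
  refine Summable.of_norm_bounded_eventually_nat (g := fun n ↦ ((u : ℝ) / r) ^ n)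
    (summable_geometric_of_lt_one (by positivity) ((div_lt_one hr).mpr hur)) ?_
  filter_upwards [eventually_norm_pow_le_of_spectralRadius_lt hau] with n hn
  calc ‖((r : ℂ)⁻¹ • a) ^ n‖ = (r : ℝ)⁻¹ ^ n * ‖a ^ n‖ := by
        rw [smul_pow, norm_smul, norm_pow, norm_inv, Complex.norm_real, Real.norm_of_nonneg hr.le]
    _ ≤ (r : ℝ)⁻¹ ^ n * u ^ n := by gcongr
    _ = ((u : ℝ) / r) ^ n := by rw [div_pow, div_eq_inv_mul, inv_pow]

end BanachAlgebra

namespace Matrix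

variable {ι : Type*} [Fintype ι] [DecidableEq ι]

section Complexification

attribute [local instance] Matrix.linftyOpNormedRing Matrix.linftyOpNormedAlgebra

theorem summable_smul_pow_of_spectralRadius_map_ofReal_lt {M : Matrix ι ι ℝ} {r : ℝ≥0}
    (h : spectralRadius ℂ (M.map Complex.ofReal) < r) :
    Summable fun n : ℕ ↦ ((r : ℝ)⁻¹ • M) ^ n := by
  have hmap (n : ℕ) : ((r : ℂ)⁻¹ • M.map Complex.ofReal) ^ n
      = (((r : ℝ)⁻¹ • M) ^ n).map Complex.ofReal := by
    have h₁ : (r : ℂ)⁻¹ • M.map Complex.ofReal = ((r : ℝ)⁻¹ • M).map Complex.ofReal := by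
      ext; simp
    rw [h₁]
    exact (map_pow Complex.ofRealHom.mapMatrix _ n).symm
  have hC := summable_smul_pow_of_spectralRadius_lt h
  simp_rw [hmap] at hC
  refine Pi.summable.mpr fun i ↦ Pi.summable.mpr fun j ↦ ?_
  rw [← Complex.summable_ofReal]
  exact Pi.summable.mp (Pi.summable.mp hC i) j

end Complexification

theorem exists_one_le_vecMul_eq_sub_one_of_summable_pow {M : Matrix ι ι ℝ}
    (hM : ∀ i j, 0 ≤ M i j) (hsum : Summable (M ^ ·)) :
    ∃ κ : ι → ℝ, (∀ i, 1 ≤ κ i) ∧ κ ᵥ* M = κ - 1 := by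
  have hN : ∀ i j, 0 ≤ (∑' n : ℕ, M ^ n) i j := fun i j ↦
    (Pi.hasSum.mp (Pi.hasSum.mp hsum.hasSum i) j).nonneg fun n ↦ pow_apply_nonneg hM n i j
  set N := ∑' n : ℕ, M ^ n
  have hNM : N * M = N - 1 := by
    have h := hsum.tsum_pow_mul_one_sub
    rw [mul_sub, mul_one] at h
    rw [← h]
    abel
  refine ⟨1 ᵥ* N, fun j ↦ ?_, by rw [vecMul_vecMul, hNM, vecMul_sub, vecMul_one]⟩
  have hκ : 1 ᵥ* N = 1 ᵥ* (N * M) + 1 := by rw [hNM, vecMul_sub, vecMul_one]; abel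
  rw [hκ, Pi.add_apply, Pi.one_apply, le_add_iff_nonneg_left]
  exact Finset.sum_nonneg fun i _ ↦ mul_nonneg zero_le_one
    (Finset.sum_nonneg fun k _ ↦ mul_nonneg (hN i k) (hM k j))

end Matrix

/-- if `Φ` is a nonnegative `d × d` matrix with spectral radius strictly
smaller than `1`, then there exist a vector `κ` with strictly positive coordinates and
`ρ ∈ [0,1)` such that, componentwise, `Φᵀ κ ≤ ρ κ`. -/
theorem stmt13 (d : ℕ) (Φ : Matrix (Fin d) (Fin d) ℝ)
    (hΦpos : ∀ i j, 0 ≤ Φ i j)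
    (hΦspec : spectralRadius ℂ (Φ.map (Complex.ofReal)) < 1) :
    ∃ (κ : Fin d → ℝ) (ρ : ℝ), (∀ i, 0 < κ i) ∧ 0 ≤ ρ ∧ ρ < 1 ∧
      ∀ i, Φᵀ.mulVec κ i ≤ ρ * κ i := by
  obtain ⟨s, hΦs, hs1⟩ := ENNReal.lt_iff_exists_nnreal_btwn.mp hΦspec
  have hs0 : (0 : ℝ) < s := by exact_mod_cast (zero_le.trans_lt hΦs : (0 : ℝ≥0∞) < s)
  obtain ⟨κ, hκ1, hκΦ⟩ := exists_one_le_vecMul_eq_sub_one_of_summable_pow (M := (s : ℝ)⁻¹ • Φ)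
    (fun i j ↦ mul_nonneg (inv_nonneg.mpr hs0.le) (hΦpos i j))
    (summable_smul_pow_of_spectralRadius_map_ofReal_lt hΦs)
  rw [vecMul_smul, inv_smul_eq_iff₀ hs0.ne'] at hκΦ
  refine ⟨κ, s, fun i ↦ one_pos.trans_le (hκ1 i), s.coe_nonneg, by exact_mod_cast hs1, fun i ↦ ?_⟩
  calc (Φᵀ *ᵥ κ) i = s * (κ i - 1) := by rw [mulVec_transpose, hκΦ]; rfl
    _ ≤ s * κ i := by gcongr; linarith
end
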